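/- arXiv:1103.4198 — 9 statements merged into one kernel-verified Lean document; each statement's English description precedes it below -/
import Mathlib

section
/- The real linear span of the set of functions t ↦ t^k e^{−x t} cos(y t) and t ↦ t^k e^{−x t} sin(y t) on [0,∞), where k ranges over nonnegative integers, x over positive reals, and y over all reals, is dense in C₀(ℝ₊) with respect to the supremum norm. -/
open scoped NNReal

/-- The set of damped sinusoids `t ↦ tᵏ e^{-x t} cos(y t)` and `t ↦ tᵏ e^{-x t} sin(y t)`
on `[0,∞)`, with `k` a nonnegative integer, `x > 0` and `y` real. -/
def dampedSinusoids : Set (ℝ≥0 → ℝ) :=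
  {f | ∃ (k : ℕ) (x y : ℝ), 0 < x ∧
    (f = (fun t : ℝ≥0 => (t : ℝ) ^ k * Real.exp (-x * t) * Real.cos (y * t)) ∨
      f = (fun t : ℝ≥0 => (t : ℝ) ^ k * Real.exp (-x * t) * Real.sin (y * t)))}

/-!
The substitution `u = e^{-t}` maps `[0,∞)` onto `(0,1]` and turns `e ∈ C₀(ℝ₊)` into a
function continuous on `[0,1]` vanishing at `0`. By Weierstrass it is uniformly close to a
polynomial with zero constant term, and `t ↦ (e^{-t})ᵏ = e^{-k t}` is a damped sinusoid for
every `k ≥ 1`.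
-/

open Filter Set Topology Polynomial

section CompNegLog

variable {E : Type*} [Zero E]

/-- `e` in the variable `u = e^{-t}`, extended by `0` to `u ≤ 0`. -/
noncomputable def compNegLog (e : ℝ≥0 → E) (u : ℝ) : E :=
  if u ≤ 0 then 0 else e (-Real.log u).toNNReal

@[simp]
lemma compNegLog_zero (e : ℝ≥0 → E) : compNegLog e 0 = 0 := if_pos le_rfl

lemma compNegLog_of_pos (e : ℝ≥0 → E) {u : ℝ} (hu : 0 < u) :
    compNegLog e u = e (-Real.log u).toNNReal := if_neg hu.not_ge

@[simp]
lemma compNegLog_exp_neg (e : ℝ≥0 → E) (t : ℝ≥0) :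
    compNegLog e (Real.exp (-t)) = e t := by
  rw [compNegLog_of_pos e (Real.exp_pos _), Real.log_exp, neg_neg, Real.toNNReal_coe]

lemma continuousOn_compNegLog [TopologicalSpace E] {e : ℝ≥0 → E} (he : Continuous e)
    (he0 : Tendsto e atTop (𝓝 0)) :
    ContinuousOn (compNegLog e) (Ici 0) := by
  have hpos : ∀ᶠ v in 𝓝[>] (0 : ℝ), e (-Real.log v).toNNReal = compNegLog e v :=
    eventually_mem_nhdsWithin.mono fun v hv => (compNegLog_of_pos e hv).symm
  intro u hu
  rcases (mem_Ici.1 hu).eq_or_lt with rfl | hu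
  · rw [← continuousWithinAt_Ioi_iff_Ici, ContinuousWithinAt, compNegLog_zero]
    have h_log : Tendsto (fun v : ℝ => (-Real.log v).toNNReal) (𝓝[>] 0) atTop :=
      tendsto_real_toNNReal_atTop.comp (tendsto_neg_atTop_iff.2 Real.tendsto_log_nhdsGT_zero)
    exact (he0.comp h_log).congr' hpos
  · have h_cont : ContinuousAt (fun v : ℝ => e (-Real.log v).toNNReal) u :=
      he.continuousAt.comp <| continuous_real_toNNReal.continuousAt.comp
        (Real.continuousAt_log hu.ne').neg
    refine (h_cont.congr ?_).continuousWithinAt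
    filter_upwards [eventually_gt_nhds hu] with v hv
    exact (compNegLog_of_pos e hv).symm

end CompNegLog

lemma exists_polynomial_near_of_continuousOn_of_eval_zero {a b : ℝ} (h0 : (0 : ℝ) ∈ Icc a b)
    {f : ℝ → ℝ} (hf : ContinuousOn f (Icc a b)) (hf0 : f 0 = 0) {ε : ℝ} (hε : 0 < ε) :
    ∃ q : ℝ[X], q.eval 0 = 0 ∧ ∀ x ∈ Icc a b, |q.eval x - f x| < ε := by
  obtain ⟨p, hp⟩ := exists_polynomial_near_of_continuousOn a b f hf (ε / 2) (half_pos hε)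
  refine ⟨p - C (p.eval 0), by simp, fun x hx => ?_⟩
  have hp0 : |p.eval 0| < ε / 2 := by simpa [hf0] using hp 0 h0
  calc |(p - C (p.eval 0)).eval x - f x| = |(p.eval x - f x) - p.eval 0| := by simp [sub_right_comm]
    _ ≤ |p.eval x - f x| + |p.eval 0| := abs_sub _ _
    _ < ε / 2 + ε / 2 := add_lt_add (hp x hx) hp0
    _ = ε := add_halves ε

lemma exp_neg_pow_mem_dampedSinusoids {k : ℕ} (hk : k ≠ 0) :
    (fun t : ℝ≥0 => Real.exp (-t) ^ k) ∈ dampedSinusoids := by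
  refine ⟨0, k, 0, Nat.cast_pos.2 (Nat.pos_of_ne_zero hk), Or.inl (funext fun t => ?_)⟩
  rw [← Real.exp_nat_mul]
  simp

lemma eval_exp_neg_mem_span_dampedSinusoids {q : ℝ[X]} (hq : q.eval 0 = 0) :
    (fun t : ℝ≥0 => q.eval (Real.exp (-t))) ∈ Submodule.span ℝ dampedSinusoids := by
  have h_sum : (fun t : ℝ≥0 => q.eval (Real.exp (-t))) =
      ∑ k ∈ q.support, q.coeff k • fun t : ℝ≥0 => Real.exp (-t) ^ k := by
    ext t
    simp [eval_eq_sum, Polynomial.sum_def]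
  rw [h_sum]
  refine Submodule.sum_mem _ fun k hk => Submodule.smul_mem _ _ (Submodule.subset_span ?_)
  refine exp_neg_pow_mem_dampedSinusoids fun hk0 => mem_support_iff.1 hk ?_
  rw [hk0, coeff_zero_eq_eval_zero, hq]

/-- The real linear span of the damped sinusoids is dense in `C₀(ℝ₊)` for the
supremum norm: every continuous `e : [0,∞) → ℝ` tending to `0` at infinity can be
uniformly approximated by finite linear combinations of damped sinusoids. -/
theorem dampedSinusoids_span_dense
    (e : ℝ≥0 → ℝ) (he : Continuous e) (he0 : Filter.Tendsto e Filter.atTop (nhds 0))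
    (ε : ℝ) (hε : 0 < ε) :
    ∃ g ∈ Submodule.span ℝ dampedSinusoids, ∀ t : ℝ≥0, |e t - g t| < ε := by
  obtain ⟨q, hq0, hq⟩ := exists_polynomial_near_of_continuousOn_of_eval_zero
    (left_mem_Icc.2 zero_le_one) ((continuousOn_compNegLog he he0).mono Icc_subset_Ici_self)
    (compNegLog_zero e) hε
  refine ⟨_, eval_exp_neg_mem_span_dampedSinusoids hq0, fun t => ?_⟩
  have h_mem : Real.exp (-t) ∈ Icc (0 : ℝ) 1 :=
    ⟨(Real.exp_pos _).le, Real.exp_le_one_iff.2 (neg_nonpos.2 t.2)⟩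
  simpa [abs_sub_comm] using hq _ h_mem
end

section
/- Let m ≥ 1 be an integer. The real linear span of the set of functions t ↦ t^k e^{−x t} cos(y t) and t ↦ t^k e^{−x t} sin(y t) on [0,∞), where k ranges over integers with k ≥ m, x over positive reals, and y over all reals, is dense, with respect to the supremum norm, in the subspace {e ∈ C₀(ℝ₊) : e(0) = 0}. -/
/-!
Only the functions `tᵐ e^{-x t}` are needed. Since `e 0 = 0` and `e → 0`, the function `e` is
uniformly close to `tᵐ e^{-t} g` with `g` continuous and vanishing at infinity (divide `e` by
`tᵐ e^{-t}` after flattening it near `0` and cutting it off near `∞`). In the variable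
`u = e^{-t}`, the Weierstrass theorem on `[0, 1]` approximates `g` uniformly by sums
`∑ cᵢ e^{-(i+1) t}`, and the error stays small after multiplication by `tᵐ e^{-t} ≤ m!`.
-/

open scoped NNReal

/-- The set of damped sinusoids `t ↦ tᵏ e^{-x t} cos(y t)` and `t ↦ tᵏ e^{-x t} sin(y t)`
on `[0,∞)`, with `k ≥ m` an integer, `x > 0` and `y` real. -/
def dampedSinusoidsFrom (m : ℕ) : Set (ℝ≥0 → ℝ) :=
  {f | ∃ (k : ℕ) (x y : ℝ), m ≤ k ∧ 0 < x ∧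
    (f = (fun t : ℝ≥0 => (t : ℝ) ^ k * Real.exp (-x * t) * Real.cos (y * t)) ∨
      f = (fun t : ℝ≥0 => (t : ℝ) ^ k * Real.exp (-x * t) * Real.sin (y * t)))}

open Filter Real Set Topology Finset
open scoped Nat Polynomial

lemma pow_mul_exp_neg_le_factorial {t : ℝ} (ht : 0 ≤ t) (n : ℕ) : t ^ n * exp (-t) ≤ n ! := by
  have := pow_div_factorial_le_exp t ht n
  rw [div_le_iff₀ (by positivity)] at this
  rw [exp_neg, ← div_eq_mul_inv, div_le_iff₀ (exp_pos t)]
  linarith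

lemma Polynomial.eval_sub_eval_zero {R : Type*} [CommRing R] (p : R[X]) (u : R) :
    p.eval u - p.eval 0 = ∑ i ∈ range p.natDegree, p.coeff (i + 1) * u ^ (i + 1) := by
  rw [p.eval_eq_sum_range, sum_range_succ', ← p.coeff_zero_eq_eval_zero]
  simp

lemma continuousOn_update_comp_neg_log {h : ℝ≥0 → ℝ} (hc : Continuous h)
    (h0 : Tendsto h atTop (𝓝 0)) :
    ContinuousOn (Function.update (fun u : ℝ => h (-log u).toNNReal) 0 0) (Icc 0 1) := by
  rw [continuousOn_update_iff]
  refine ⟨fun u hu => ?_, fun _ => ?_⟩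
  · exact (hc.continuousAt.comp (continuous_real_toNNReal.continuousAt.comp
      (continuousAt_log hu.2).neg)).continuousWithinAt
  · have hpos : Icc (0 : ℝ) 1 \ {0} ⊆ Ioi 0 := fun u hu => lt_of_le_of_ne hu.1.1 (Ne.symm hu.2)
    have hlog : Tendsto (fun u => -log u) (𝓝[Icc 0 1 \ {0}] 0) atTop :=
      tendsto_neg_atBot_atTop.comp (tendsto_log_nhdsGT_zero.mono_left (nhdsWithin_mono _ hpos))
    exact h0.comp (tendsto_real_toNNReal_atTop.comp hlog)

theorem exists_sum_exp_neg_near {h : ℝ≥0 → ℝ} (hc : Continuous h) (h0 : Tendsto h atTop (𝓝 0))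
    {ε : ℝ} (hε : 0 < ε) :
    ∃ (d : ℕ) (c : ℕ → ℝ), ∀ t : ℝ≥0,
      |h t - ∑ i ∈ range d, c i * exp (-(i + 1) * t)| < ε := by
  -- `h` in the variable `u = e^{-t}`, extended by its limit at `u = 0`
  set F := Function.update (fun u : ℝ => h (-log u).toNNReal) 0 0
  obtain ⟨p, hp⟩ := exists_polynomial_near_of_continuousOn 0 1 F
    (continuousOn_update_comp_neg_log hc h0) (ε / 2) (half_pos hε)
  refine ⟨p.natDegree, fun i => p.coeff (i + 1), fun t => ?_⟩
  set u := exp (-t)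
  have hu : u ∈ Icc (0 : ℝ) 1 := ⟨(exp_pos _).le, exp_le_one_iff.mpr (neg_nonpos.mpr t.2)⟩
  have hFu : F u = h t := by
    simp [F, u, (exp_pos _).ne']
  have hsum : ∑ i ∈ range p.natDegree, p.coeff (i + 1) * exp (-(i + 1) * t)
      = p.eval u - p.eval 0 := by
    rw [p.eval_sub_eval_zero]
    refine sum_congr rfl fun i _ => ?_
    rw [← exp_nat_mul]
    push_cast
    ring_nf
  have hF0 : F 0 = 0 := Function.update_self ..
  have h1 := hp u hu
  have h2 := hp 0 (left_mem_Icc.mpr zero_le_one)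
  rw [hsum, ← hFu]
  calc |F u - (p.eval u - p.eval 0)| = |(p.eval 0 - F 0) - (p.eval u - F u)| := by
        rw [hF0]; ring_nf
    _ ≤ |p.eval 0 - F 0| + |p.eval u - F u| := abs_sub _ _
    _ < ε := by linarith

noncomputable def rampCutoff (R t : ℝ) : ℝ := max 0 (min 1 (2 - t / R))

lemma rampCutoff_nonneg (R t : ℝ) : 0 ≤ rampCutoff R t := le_max_left _ _

lemma rampCutoff_le_one (R t : ℝ) : rampCutoff R t ≤ 1 :=
  max_le zero_le_one (min_le_left _ _)

lemma rampCutoff_eq_one {R t : ℝ} (hR : 0 < R) (ht : t ≤ R) : rampCutoff R t = 1 := by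
  have : 1 ≤ 2 - t / R := by linarith [(div_le_one hR).mpr ht]
  simp [rampCutoff, min_eq_left this]

lemma rampCutoff_eq_zero {R t : ℝ} (hR : 0 < R) (ht : 2 * R ≤ t) : rampCutoff R t = 0 := by
  have : 2 - t / R ≤ 0 := by rw [sub_nonpos, le_div_iff₀ hR]; linarith
  simp [rampCutoff, min_le_of_right_le this]

lemma continuous_rampCutoff (R : ℝ) : Continuous (rampCutoff R) := by
  unfold rampCutoff; fun_prop

lemma abs_sub_mul_lt {a c ε : ℝ} (hε : 0 < ε) (hc0 : 0 ≤ c) (hc1 : c ≤ 1)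
    (h : c = 1 ∨ |a| < ε) : |a - a * c| < ε := by
  rcases h with rfl | ha
  · simpa using hε
  · calc |a - a * c| = |a| * |1 - c| := by rw [← abs_mul, mul_one_sub]
      _ ≤ |a| := mul_le_of_le_one_right (abs_nonneg a) (abs_le.mpr ⟨by linarith, by linarith⟩)
      _ < ε := ha

theorem exists_continuous_tendsto_zero_near_pow_mul_exp_neg_mul (m : ℕ) {e : ℝ≥0 → ℝ}
    (he : Continuous e) (he0 : Tendsto e atTop (𝓝 0)) (he00 : e 0 = 0) {ε : ℝ} (hε : 0 < ε) :
    ∃ g : ℝ≥0 → ℝ, Continuous g ∧ Tendsto g atTop (𝓝 0) ∧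
      ∀ t : ℝ≥0, |e t - t ^ m * exp (-t) * g t| < ε := by
  obtain ⟨δ, hδ, hsmall_zero⟩ : ∃ δ > 0, ∀ t : ℝ≥0, (t : ℝ) < δ → |e t| < ε := by
    obtain ⟨δ, hδ, h⟩ := Metric.tendsto_nhds_nhds.mp (he00 ▸ he.tendsto 0) ε hε
    refine ⟨δ, hδ, fun t ht => ?_⟩
    simpa [NNReal.dist_eq, ht] using h (x := t)
  obtain ⟨R, hR, hsmall_atTop⟩ : ∃ R : ℝ, 0 < R ∧ ∀ t : ℝ≥0, R < t → |e t| < ε := by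
    obtain ⟨N, hN⟩ := Metric.tendsto_atTop.mp he0 ε hε
    refine ⟨N + 1, by positivity, fun t ht => ?_⟩
    simpa using hN t (by rw [ge_iff_le, ← NNReal.coe_le_coe]; linarith)
  have hmax : ∀ t : ℝ≥0, 0 < max δ t := fun t => lt_max_of_lt_left hδ
  set g := fun t : ℝ≥0 => e t * exp t * (max δ t)⁻¹ ^ m * rampCutoff R t
  refine ⟨g, ?_, ?_, fun t => ?_⟩
  · have : Continuous fun t : ℝ≥0 => (max δ (t : ℝ))⁻¹ :=
      (continuous_const.max NNReal.continuous_coe).inv₀ fun t => (hmax t).ne'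
    exact ((he.mul (continuous_exp.comp NNReal.continuous_coe)).mul (this.pow m)).mul
      ((continuous_rampCutoff R).comp NNReal.continuous_coe)
  · refine tendsto_const_nhds.congr' ?_
    filter_upwards [eventually_ge_atTop (2 * R).toNNReal] with t ht
    simp [g, rampCutoff_eq_zero hR (Real.toNNReal_le_iff_le_coe.mp ht)]
  · have hfactor : t ^ m * exp (-t) * g t = e t * ((t / max δ t) ^ m * rampCutoff R t) := by
      simp only [g]
      rw [div_eq_mul_inv, mul_pow, exp_neg]
      field_simp
    have hq0 : 0 ≤ (t : ℝ) / max δ t := div_nonneg t.2 (hmax t).le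
    have hq1 : (t : ℝ) / max δ t ≤ 1 := div_le_one_of_le₀ (le_max_right _ _) (hmax t).le
    rw [hfactor]
    refine abs_sub_mul_lt hε (mul_nonneg (pow_nonneg hq0 m) (rampCutoff_nonneg _ _))
      (mul_le_one₀ (pow_le_one₀ hq0 hq1) (rampCutoff_nonneg _ _) (rampCutoff_le_one _ _)) ?_
    by_cases ht : δ ≤ t ∧ t ≤ R
    · left
      rw [max_eq_right ht.1, div_self (hδ.trans_le ht.1).ne', one_pow, one_mul,
        rampCutoff_eq_one hR ht.2]
    · right
      rcases lt_or_ge (t : ℝ) δ with h | h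
      · exact hsmall_zero t h
      · exact hsmall_atTop t (lt_of_not_ge fun h' => ht ⟨h, h'⟩)

lemma pow_mul_exp_neg_mul_mem_dampedSinusoidsFrom (m : ℕ) {x : ℝ} (hx : 0 < x) :
    (fun t : ℝ≥0 => (t : ℝ) ^ m * exp (-x * t)) ∈ dampedSinusoidsFrom m :=
  ⟨m, x, 0, le_rfl, hx, Or.inl (by ext; simp)⟩

lemma pow_mul_exp_neg_mul_sum_exp_mem_span (m d : ℕ) (c : ℕ → ℝ) :
    (fun t : ℝ≥0 => (t : ℝ) ^ m * exp (-t) * ∑ i ∈ range d, c i * exp (-(i + 1) * t)) ∈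
      Submodule.span ℝ (dampedSinusoidsFrom m) := by
  have hsum : (fun t : ℝ≥0 => (t : ℝ) ^ m * exp (-t) * ∑ i ∈ range d, c i * exp (-(i + 1) * t))
      = ∑ i ∈ range d, c i • fun t : ℝ≥0 => (t : ℝ) ^ m * exp (-(i + 2) * t) := by
    ext t
    simp only [Finset.sum_apply, Pi.smul_apply, smul_eq_mul, Finset.mul_sum]
    refine sum_congr rfl fun i _ => ?_
    rw [show -((i : ℝ) + 2) * t = -t + -(i + 1) * t by ring, exp_add]
    ring
  rw [hsum]
  exact Submodule.sum_mem _ fun i _ => Submodule.smul_mem _ _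
    (Submodule.subset_span (pow_mul_exp_neg_mul_mem_dampedSinusoidsFrom m (by positivity)))

theorem dampedSinusoidsFrom_span_dense_general
    (m : ℕ)
    (e : ℝ≥0 → ℝ) (he : Continuous e) (he0 : Filter.Tendsto e Filter.atTop (nhds 0))
    (he00 : e 0 = 0) (ε : ℝ) (hε : 0 < ε) :
    ∃ g ∈ Submodule.span ℝ (dampedSinusoidsFrom m), ∀ t : ℝ≥0, |e t - g t| < ε := by
  obtain ⟨g, hgc, hg0, hg⟩ :=
    exists_continuous_tendsto_zero_near_pow_mul_exp_neg_mul m he he0 he00 (half_pos hε)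
  have hfact : (0 : ℝ) < m ! := by positivity
  obtain ⟨d, c, hc⟩ := exists_sum_exp_neg_near hgc hg0 (div_pos (half_pos hε) hfact)
  refine ⟨_, pow_mul_exp_neg_mul_sum_exp_mem_span m d c, fun t => ?_⟩
  set w := (t : ℝ) ^ m * exp (-t)
  set S := ∑ i ∈ range d, c i * exp (-(i + 1) * (t : ℝ))
  have hw : 0 ≤ w := by positivity
  calc |e t - w * S|
      ≤ |e t - w * g t| + w * |g t - S| :=
        (abs_sub_le _ (w * g t) _).trans_eq (by rw [← mul_sub, abs_mul, abs_of_nonneg hw])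
    _ ≤ |e t - w * g t| + m ! * |g t - S| := by
        gcongr; exact pow_mul_exp_neg_le_factorial t.2 m
    _ < ε / 2 + m ! * (ε / 2 / m !) := by gcongr; exacts [hg t, hc t]
    _ = ε := by field_simp; ring

/-- For `m ≥ 1`, the real linear span of the damped sinusoids `tᵏ e^{-x t} cos(y t)`,
`tᵏ e^{-x t} sin(y t)` with `k ≥ m`, `x > 0`, `y ∈ ℝ` is dense, for the supremum norm,
in the subspace `{e ∈ C₀(ℝ₊) : e 0 = 0}`. -/
theorem dampedSinusoidsFrom_span_dense
    (m : ℕ) (hm : 1 ≤ m)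
    (e : ℝ≥0 → ℝ) (he : Continuous e) (he0 : Filter.Tendsto e Filter.atTop (nhds 0))
    (he00 : e 0 = 0) (ε : ℝ) (hε : 0 < ε) :
    ∃ g ∈ Submodule.span ℝ (dampedSinusoidsFrom m), ∀ t : ℝ≥0, |e t - g t| < ε :=
  dampedSinusoidsFrom_span_dense_general m e he he0 he00 ε hε
end

section
/- Let y₁, …, y_N be nonzero real numbers with y_i ≠ y_j and y_i ≠ −y_j whenever i ≠ j, and let α₁, …, α_N and β₁, …, β_N be real scalars. Suppose there exist constants C > 0, ρ > 0 and T ≥ 0 such that ∑_{i=1}^N (α_i cos(y_i t) + β_i sin(y_i t)) ≥ −C e^{−ρ t} for all t ≥ T. Then α_i = 0 and β_i = 0 for every i = 1, …, N. -/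
/-!
Let `f` be the trigonometric sum and take mean values `lim (1/R) ∫_T^R` as `R → ∞`. Since all
frequencies are nonzero, `f` has mean `0`; since `y_i ± y_j ≠ 0` except for `y_i - y_j` with
`i = j`, orthogonality gives mean `α_j / 2` for `f(t) cos(y_j t)` and `β_j / 2` for
`f(t) sin(y_j t)`. The weights `1 ± cos(y_j t)` lie in `[0, 2]`, so `f(t) (1 ± cos(y_j t))` is
bounded below by an integrable function and its mean `± α_j / 2` is nonnegative; hence
`α_j = 0`, and likewise `β_j = 0`.
-/

open Filter MeasureTheory Real Set Topology

def HasMeanValue (a : ℝ) (g : ℝ → ℝ) (L : ℝ) : Prop :=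
  Tendsto (fun R => (∫ t in a..R, g t) / R) atTop (𝓝 L)

namespace HasMeanValue

variable {a L M : ℝ} {f g h : ℝ → ℝ}

lemma add (hf : Continuous f) (hg : Continuous g) (hfL : HasMeanValue a f L)
    (hgM : HasMeanValue a g M) : HasMeanValue a (fun t => f t + g t) (L + M) := by
  refine (Tendsto.add hfL hgM).congr fun R => ?_
  rw [intervalIntegral.integral_add (hf.intervalIntegrable _ _) (hg.intervalIntegrable _ _),
    add_div]

lemma const_mul (c : ℝ) (hf : HasMeanValue a f L) : HasMeanValue a (fun t => c * f t) (c * L) :=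
  (Tendsto.const_mul c hf).congr fun R => by rw [intervalIntegral.integral_const_mul, mul_div_assoc]

lemma sum {ι : Type*} (s : Finset ι) {f : ι → ℝ → ℝ} {L : ι → ℝ}
    (hf : ∀ i ∈ s, Continuous (f i)) (hL : ∀ i ∈ s, HasMeanValue a (f i) (L i)) :
    HasMeanValue a (fun t => ∑ i ∈ s, f i t) (∑ i ∈ s, L i) := by
  refine (tendsto_finsetSum s hL).congr fun R => ?_
  rw [intervalIntegral.integral_finsetSum fun i hi => (hf i hi).intervalIntegrable _ _,
    Finset.sum_div]

lemma of_abs_integral_le (hg : ∀ R, |∫ t in a..R, g t| ≤ M) : HasMeanValue a g 0 :=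
  tendsto_bdd_div_atTop_nhds_zero (b := -M) (B := M)
    (Eventually.of_forall fun R => (abs_le.mp (hg R)).1)
    (Eventually.of_forall fun R => (abs_le.mp (hg R)).2) tendsto_id

lemma nonneg_of_le (hg : Continuous g) (hh : IntegrableOn h (Ioi a)) (hhg : ∀ t ≥ a, h t ≤ g t)
    (hL : HasMeanValue a g L) : 0 ≤ L := by
  have hh0 : HasMeanValue a h 0 :=
    (intervalIntegral_tendsto_integral_Ioi a hh tendsto_id).div_atTop tendsto_id
  refine le_of_tendsto_of_tendsto hh0 hL ?_
  filter_upwards [eventually_ge_atTop a, eventually_gt_atTop 0] with R haR hR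
  gcongr
  exact intervalIntegral.integral_mono_on haR
    ((intervalIntegrable_iff_integrableOn_Ioc_of_le haR).mpr (hh.mono_set Ioc_subset_Ioi_self))
    (hg.intervalIntegrable _ _) fun t ht => hhg t ht.1

lemma eq_zero_of_mul {w : ℝ → ℝ} (hf : Continuous f) (hw : Continuous w) (hw1 : ∀ t, |w t| ≤ 1)
    (hh : IntegrableOn h (Ioi a)) (hhf : ∀ t ≥ a, h t ≤ f t) (hf0 : HasMeanValue a f 0)
    (hfw : HasMeanValue a (fun t => f t * w t) L) : L = 0 := by
  have hsign : ∀ s : ℝ, |s| ≤ 1 → 0 ≤ s * L := by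
    intro s hs
    have hmean : HasMeanValue a (fun t => f t + s * (f t * w t)) (0 + s * L) :=
      hf0.add hf (by fun_prop) (hfw.const_mul s)
    refine zero_add (s * L) ▸ hmean.nonneg_of_le (by fun_prop) (hh.norm.const_mul (-2)) ?_
    intro t ht
    -- `-2|h| ≤ -|h| (1 + s w) ≤ f (1 + s w)` because `0 ≤ 1 + s w ≤ 2`
    have hsw : |s * w t| ≤ 1 := by
      rw [abs_mul]; exact mul_le_one₀ hs (abs_nonneg _) (hw1 t)
    have hfh : -|h t| ≤ f t := (neg_abs_le _).trans (hhf t ht)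
    rw [Real.norm_eq_abs]
    nlinarith [abs_le.mp hsw, abs_nonneg (h t)]
  have h1 := hsign 1 (by norm_num)
  have h2 := hsign (-1) (by norm_num)
  linarith

end HasMeanValue

section Trigonometric

variable {a : ℝ}

lemma hasMeanValue_const (c : ℝ) : HasMeanValue a (fun _ => c) c := by
  have h : Tendsto (fun R : ℝ => c - a * c / R) atTop (𝓝 (c - 0)) :=
    tendsto_const_nhds.sub (tendsto_const_nhds.div_atTop tendsto_id)
  refine (sub_zero c ▸ h).congr' ?_
  filter_upwards [eventually_ne_atTop 0] with R hR
  simp only [intervalIntegral.integral_const, smul_eq_mul]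
  field_simp

lemma hasMeanValue_cos_mul (u : ℝ) :
    HasMeanValue a (fun t => cos (u * t)) (if u = 0 then 1 else 0) := by
  split_ifs with hu
  · simpa [hu] using hasMeanValue_const (a := a) 1
  refine HasMeanValue.of_abs_integral_le (M := |u⁻¹| * 2) fun R => ?_
  rw [intervalIntegral.integral_comp_mul_left (fun x => cos x) hu, integral_cos, smul_eq_mul,
    abs_mul]
  gcongr
  exact (abs_sub _ _).trans (by linarith [abs_sin_le_one (u * R), abs_sin_le_one (u * a)])

lemma hasMeanValue_sin_mul (u : ℝ) : HasMeanValue a (fun t => sin (u * t)) 0 := by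
  rcases eq_or_ne u 0 with rfl | hu
  · simpa using hasMeanValue_const (a := a) 0
  refine HasMeanValue.of_abs_integral_le (M := |u⁻¹| * 2) fun R => ?_
  rw [intervalIntegral.integral_comp_mul_left (fun x => sin x) hu, integral_sin, smul_eq_mul,
    abs_mul]
  gcongr
  exact (abs_sub _ _).trans (by linarith [abs_cos_le_one (u * R), abs_cos_le_one (u * a)])

variable {u v : ℝ}

lemma hasMeanValue_cos_mul_cos (huv : u + v ≠ 0) :
    HasMeanValue a (fun t => cos (u * t) * cos (v * t)) (if u = v then 1 / 2 else 0) := by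
  have h := ((hasMeanValue_cos_mul (a := a) (u - v)).add (by fun_prop) (by fun_prop)
    (hasMeanValue_cos_mul (u + v))).const_mul (1 / 2)
  convert h using 2
  · rw [sub_mul, add_mul, cos_sub, cos_add]; ring
  · simp [sub_eq_zero, huv]

lemma hasMeanValue_sin_mul_sin (huv : u + v ≠ 0) :
    HasMeanValue a (fun t => sin (u * t) * sin (v * t)) (if u = v then 1 / 2 else 0) := by
  have h := ((hasMeanValue_cos_mul (a := a) (u - v)).add (by fun_prop) (by fun_prop)
    ((hasMeanValue_cos_mul (u + v)).const_mul (-1))).const_mul (1 / 2)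
  convert h using 2
  · rw [sub_mul, add_mul, cos_sub, cos_add]; ring
  · simp [sub_eq_zero, huv]

lemma hasMeanValue_sin_mul_cos (u v : ℝ) :
    HasMeanValue a (fun t => sin (u * t) * cos (v * t)) 0 := by
  have h := ((hasMeanValue_sin_mul (a := a) (u + v)).add (by fun_prop) (by fun_prop)
    (hasMeanValue_sin_mul (u - v))).const_mul (1 / 2)
  convert h using 2
  · rw [sub_mul, add_mul, sin_sub, sin_add]; ring
  · ring

end Trigonometric

section TrigPoly

variable {ι : Type*} [Fintype ι] (α β y : ι → ℝ)

noncomputable def trigPoly (t : ℝ) : ℝ := ∑ i, (α i * cos (y i * t) + β i * sin (y i * t))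

lemma continuous_trigPoly : Continuous (trigPoly α β y) := by
  unfold trigPoly; fun_prop

variable {α β y} {a : ℝ}

lemma hasMeanValue_trigPoly (hy : ∀ i, y i ≠ 0) : HasMeanValue a (trigPoly α β y) 0 := by
  have h := HasMeanValue.sum (a := a) Finset.univ (fun i _ => by fun_prop) fun i _ =>
    ((hasMeanValue_cos_mul (y i)).const_mul (α i)).add (by fun_prop) (by fun_prop)
      ((hasMeanValue_sin_mul (y i)).const_mul (β i))
  simp only [hy, if_false, mul_zero, add_zero, Finset.sum_const_zero] at h
  exact h

lemma hasMeanValue_trigPoly_mul_cos (hinj : Function.Injective y) (hy : ∀ i j, y i + y j ≠ 0)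
    (j : ι) : HasMeanValue a (fun t => trigPoly α β y t * cos (y j * t)) (α j / 2) := by
  classical
  have h := HasMeanValue.sum (a := a) Finset.univ (fun i _ => by fun_prop) fun i _ =>
    ((hasMeanValue_cos_mul_cos (hy i j)).const_mul (α i)).add (by fun_prop) (by fun_prop)
      ((hasMeanValue_sin_mul_cos (y i) (y j)).const_mul (β i))
  convert h using 1
  · ext t; simp only [trigPoly, Finset.sum_mul]; congr! 1 with i; ring
  · simp only [hinj.eq_iff, one_div, mul_ite, mul_zero, add_zero, Finset.sum_ite_eq',
      Finset.mem_univ, ↓reduceIte]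
    ring

lemma hasMeanValue_trigPoly_mul_sin (hinj : Function.Injective y) (hy : ∀ i j, y i + y j ≠ 0)
    (j : ι) : HasMeanValue a (fun t => trigPoly α β y t * sin (y j * t)) (β j / 2) := by
  classical
  have h := HasMeanValue.sum (a := a) Finset.univ (fun i _ => by fun_prop) fun i _ =>
    ((hasMeanValue_sin_mul_cos (y j) (y i)).const_mul (α i)).add (by fun_prop) (by fun_prop)
      ((hasMeanValue_sin_mul_sin (hy i j)).const_mul (β i))
  convert h using 1
  · ext t; simp only [trigPoly, Finset.sum_mul]; congr! 1 with i; ring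
  · simp only [mul_zero, hinj.eq_iff, one_div, mul_ite, zero_add, Finset.sum_ite_eq',
      Finset.mem_univ, ↓reduceIte]
    ring

lemma trigPoly_coeff_eq_zero_of_le {h : ℝ → ℝ} (hinj : Function.Injective y)
    (hy : ∀ i j, y i + y j ≠ 0) (hh : IntegrableOn h (Ioi a))
    (hle : ∀ t ≥ a, h t ≤ trigPoly α β y t) (j : ι) : α j = 0 ∧ β j = 0 := by
  have hf := continuous_trigPoly α β y
  have hmean := hasMeanValue_trigPoly (α := α) (β := β) (a := a) fun i => by
    simpa [← two_mul] using hy i i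
  have hα := hmean.eq_zero_of_mul hf (by fun_prop) (fun t => abs_cos_le_one _) hh hle
    (hasMeanValue_trigPoly_mul_cos hinj hy j)
  have hβ := hmean.eq_zero_of_mul hf (by fun_prop) (fun t => abs_sin_le_one _) hh hle
    (hasMeanValue_trigPoly_mul_sin hinj hy j)
  constructor <;> linarith

end TrigPoly

theorem trig_sum_eventually_bounded_below_eq_zero_general
    (N : ℕ) (y α β : Fin N → ℝ)
    (hy : ∀ i, y i ≠ 0)
    (hy' : ∀ i j, i ≠ j → y i ≠ y j ∧ y i ≠ -y j)
    (C ρ T : ℝ) (hρ : 0 < ρ)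
    (h : ∀ t : ℝ, T ≤ t →
      -(C * Real.exp (-ρ * t)) ≤ ∑ i, (α i * Real.cos (y i * t) + β i * Real.sin (y i * t))) :
    ∀ i, α i = 0 ∧ β i = 0 := by
  have hinj : Function.Injective y := fun i j hij => by
    by_contra hne; exact (hy' i j hne).1 hij
  have hsum : ∀ i j, y i + y j ≠ 0 := by
    intro i j hij
    rcases eq_or_ne i j with rfl | hne
    · exact hy i (by linarith)
    · exact (hy' i j hne).2 (eq_neg_of_add_eq_zero_left hij)
  exact trigPoly_coeff_eq_zero_of_le hinj hsum
    ((exp_neg_integrableOn_Ioi T hρ).const_mul C).neg h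

/-- If a finite real trigonometric sum `∑ᵢ (αᵢ cos(yᵢ t) + βᵢ sin(yᵢ t))`, with nonzero
frequencies `yᵢ` that are pairwise distinct up to sign, satisfies
`∑ᵢ (αᵢ cos(yᵢ t) + βᵢ sin(yᵢ t)) ≥ -C e^{-ρ t}` for all `t ≥ T` (with `C > 0`, `ρ > 0`,
`T ≥ 0`), then all the coefficients `αᵢ`, `βᵢ` vanish. -/
theorem trig_sum_eventually_bounded_below_eq_zero
    (N : ℕ) (y α β : Fin N → ℝ)
    (hy : ∀ i, y i ≠ 0)
    (hy' : ∀ i j, i ≠ j → y i ≠ y j ∧ y i ≠ -y j)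
    (C ρ T : ℝ) (hC : 0 < C) (hρ : 0 < ρ) (hT : 0 ≤ T)
    (h : ∀ t : ℝ, T ≤ t →
      -(C * Real.exp (-ρ * t)) ≤ ∑ i, (α i * Real.cos (y i * t) + β i * Real.sin (y i * t))) :
    ∀ i, α i = 0 ∧ β i = 0 :=
  trig_sum_eventually_bounded_below_eq_zero_general N y α β hy hy' C ρ T hρ h
end

section
/- Let μ be a finite signed regular Borel measure on [0,∞). Then sup_{e ∈ C₀(ℝ₊)} ( ∫₀^∞ e dμ − sup_{t≥0} max(−e(t),0) ) equals 0 if μ is a nonpositive measure with ‖μ‖ ≤ 1, and equals +∞ otherwise. Equivalently, the Young–Fenchel conjugate of f_os(e) = sup_{t≥0} max(−e(t),0) on C₀(ℝ₊) is the indicator function of {μ : μ ≤ 0 and ‖μ‖ ≤ 1}. -/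
open MeasureTheory
open scoped NNReal

/-- The space `C₀(ℝ₊)` of continuous functions on `[0,∞)` vanishing at infinity. -/
def CZero : Type := {e : ℝ≥0 → ℝ // Continuous e ∧ Filter.Tendsto e Filter.atTop (nhds 0)}

/-- The pairing `∫₀^∞ e dμ` of a bounded measurable function with a finite signed
measure `μ = μ₊ + μ₋` (with `μ₋ ≤ 0`), computed via the Jordan decomposition. -/
noncomputable def pairing (μ : SignedMeasure ℝ≥0) (e : ℝ≥0 → ℝ) : ℝ :=
  (∫ t, e t ∂μ.toJordanDecomposition.posPart) - ∫ t, e t ∂μ.toJordanDecomposition.negPart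

/-!
Both `∫ e dμ` and `f_os(e)` are positively homogeneous in `e`, so the supremum is `0` or `+∞`
according as `∫ e dμ - f_os(e)` is never or sometimes positive. Write `μ = μ₊ - μ₋` (Jordan).
If `μ₊ = 0` and `μ₋(ℝ₊) ≤ 1`, then `∫ e dμ = ∫ (-e) dμ₋ ≤ f_os(e)`. Otherwise, by regularity of
finite Borel measures on `ℝ₊`, there is a compact `K` and a Urysohn function `0 ≤ g ≤ 1` equal to
`1` on `K`: if `μ₊ = 0` and `μ₋(K) > 1`, then `e = -g` has `∫ e dμ > 1 ≥ f_os(e)`; if `μ₊ ≠ 0`,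
choose `K` inside a `μ₋`-null set and `g` supported in an open `U ⊇ K` with `μ₋(U) < μ₊(K)`,
then `e = g` has `∫ e dμ > 0 = f_os(e)`.
-/

open Filter Set

noncomputable def overshoot {X : Type*} (e : X → ℝ) : ℝ := ⨆ t, max (-e t) 0

section Overshoot

variable {X : Type*} {e : X → ℝ}

lemma overshoot_nonneg (e : X → ℝ) : 0 ≤ overshoot e :=
  Real.iSup_nonneg fun _ => le_max_right _ _

lemma overshoot_le {c : ℝ} (hc : 0 ≤ c) (he : ∀ t, -c ≤ e t) : overshoot e ≤ c :=
  Real.iSup_le (fun t => max_le (by linarith [he t]) hc) hc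

lemma overshoot_eq_zero_of_nonneg (he : ∀ t, 0 ≤ e t) : overshoot e = 0 :=
  le_antisymm (overshoot_le le_rfl fun t => by simpa using he t) (overshoot_nonneg e)

lemma neg_le_overshoot (he : BddBelow (range e)) (t : X) : -e t ≤ overshoot e := by
  obtain ⟨C, hC⟩ := he
  refine le_ciSup_of_le ⟨max (-C) 0, ?_⟩ t (le_max_left _ _)
  rintro _ ⟨s, rfl⟩
  exact max_le_max (neg_le_neg (hC ⟨s, rfl⟩)) le_rfl

lemma overshoot_const_mul {c : ℝ} (hc : 0 ≤ c) (e : X → ℝ) :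
    overshoot (fun t => c * e t) = c * overshoot e := by
  simp only [overshoot, Real.mul_iSup_of_nonneg hc, mul_max_of_nonneg _ _ hc, mul_neg, mul_zero]

end Overshoot

namespace CZero

instance : Zero CZero := ⟨⟨0, continuous_const, tendsto_const_nhds⟩⟩

def ofHasCompactSupport {g : ℝ≥0 → ℝ} (hg : Continuous g) (hgs : HasCompactSupport g) : CZero :=
  ⟨g, hg, by simpa using hgs.is_zero_at_infty⟩

def constMul (c : ℝ) (e : CZero) : CZero :=
  ⟨fun t => c * e.1 t, continuous_const.mul e.2.1, by simpa using e.2.2.const_mul c⟩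

def toZeroAtInfty (e : CZero) : ZeroAtInftyContinuousMap ℝ≥0 ℝ where
  toFun := e.1
  continuous_toFun := e.2.1
  zero_at_infty' := by simpa using e.2.2

lemma bddBelow_range (e : CZero) : BddBelow (range e.1) :=
  e.toZeroAtInfty.toBCF.isBounded_range.bddBelow

lemma integrable (e : CZero) (ν : Measure ℝ≥0) [IsFiniteMeasure ν] : Integrable e.1 ν :=
  e.toZeroAtInfty.toBCF.integrable ν

end CZero

namespace MeasureTheory.SignedMeasure

variable {α : Type*} [MeasurableSpace α] (μ : SignedMeasure α)

lemma exists_negPart_eq_zero_lt_posPart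
    (h : μ.toJordanDecomposition.posPart ≠ 0) :
    ∃ A, MeasurableSet A ∧ μ.toJordanDecomposition.negPart A = 0 ∧
      0 < μ.toJordanDecomposition.posPart A := by
  obtain ⟨S, hS, hpS, hnS⟩ := μ.toJordanDecomposition.mutuallySingular
  refine ⟨Sᶜ, hS.compl, hnS, pos_iff_ne_zero.2 fun hpSc => ?_⟩
  apply Measure.measure_univ_ne_zero.2 h
  rw [← measure_add_measure_compl hS, hpS, hpSc, add_zero]

lemma posPart_eq_zero_iff : μ.toJordanDecomposition.posPart = 0 ↔ μ ≤ 0 := by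
  refine ⟨fun h => VectorMeasure.le_iff.2 fun s hs => ?_, fun h => ?_⟩
  · rw [μ.apply_eq_posPart_real_sub_negPart_real hs, h]
    simp
  · by_contra hp
    obtain ⟨A, hA, hnA, hpA⟩ := μ.exists_negPart_eq_zero_lt_posPart hp
    have hμA := VectorMeasure.le_iff.1 h A hA
    have hnA' : μ.toJordanDecomposition.negPart.real A = 0 := by simp [measureReal_def, hnA]
    rw [μ.apply_eq_posPart_real_sub_negPart_real hA, hnA', sub_zero] at hμA
    exact hpA.ne' ((measureReal_eq_zero_iff).1 (le_antisymm hμA measureReal_nonneg))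

lemma totalVariation_eq_negPart_of_nonpos (h : μ ≤ 0) :
    μ.totalVariation = μ.toJordanDecomposition.negPart := by
  rw [totalVariation, μ.posPart_eq_zero_iff.2 h, zero_add]

end MeasureTheory.SignedMeasure

lemma exists_continuous_measureReal_le_integral_le {X : Type*} [TopologicalSpace X]
    [T2Space X] [LocallyCompactSpace X] [MeasurableSpace X] [BorelSpace X] {K U : Set X}
    (hK : IsCompact K) (hU : IsOpen U) (hKU : K ⊆ U) :
    ∃ g : C(X, ℝ), HasCompactSupport g ∧ (∀ x, g x ∈ Icc 0 1) ∧
      ∀ (ν : Measure X) [IsFiniteMeasure ν],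
        ν.real K ≤ ∫ x, g x ∂ν ∧ ∫ x, g x ∂ν ≤ ν.real U := by
  obtain ⟨g, hgK, hgU, hgs, hg01⟩ := exists_continuous_one_zero_of_isCompact hK
    hU.isClosed_compl (disjoint_compl_right_iff_subset.2 hKU)
  refine ⟨g, hgs, hg01, fun ν _ => ⟨?_, ?_⟩⟩
  · rw [← integral_indicator_one hK.measurableSet]
    refine integral_mono_of_nonneg (Eventually.of_forall fun x => ?_)
      (g.continuous.integrable_of_hasCompactSupport hgs) (Eventually.of_forall ?_)
    · exact Set.indicator_nonneg (fun _ _ => zero_le_one) x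
    · exact Set.indicator_le' (fun x hx => (hgK hx).ge) fun x _ => (hg01 x).1
  · rw [← integral_indicator_one hU.measurableSet]
    refine integral_mono (g.continuous.integrable_of_hasCompactSupport hgs)
      ((integrable_const 1).indicator hU.measurableSet) ?_
    exact Set.le_indicator (fun x _ => (hg01 x).2) fun x hx => (hgU hx).le

noncomputable def objective (μ : SignedMeasure ℝ≥0) (e : ℝ≥0 → ℝ) : ℝ :=
  pairing μ e - overshoot e

section Objective

variable {μ : SignedMeasure ℝ≥0}

lemma objective_zero : objective μ 0 = 0 := by
  rw [objective, overshoot_eq_zero_of_nonneg (e := 0) fun _ => le_rfl]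
  simp [pairing]

lemma objective_const_mul {c : ℝ} (hc : 0 ≤ c) (e : ℝ≥0 → ℝ) :
    objective μ (fun t => c * e t) = c * objective μ e := by
  simp only [objective, pairing, overshoot_const_mul hc, integral_const_mul]
  ring

lemma iSup_objective_eq_top {e : CZero} (he : 0 < objective μ e.1) :
    ⨆ e : CZero, (objective μ e.1 : EReal) = ⊤ := by
  refine iSup_eq_top.2 fun b hb => ?_
  refine ⟨e.constMul ((|b.toReal| + 1) / objective μ e.1),
    (EReal.le_coe_toReal hb.ne).trans_lt ?_⟩
  rw [CZero.constMul, objective_const_mul (by positivity), div_mul_cancel₀ _ he.ne']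
  exact_mod_cast (le_abs_self _).trans_lt (lt_add_one _)

lemma objective_nonpos (hp : μ.toJordanDecomposition.posPart = 0)
    (hn : μ.toJordanDecomposition.negPart univ ≤ 1) (e : CZero) : objective μ e.1 ≤ 0 := by
  set n := μ.toJordanDecomposition.negPart
  have hpair : pairing μ e.1 = ∫ t, -e.1 t ∂n := by
    simp only [pairing, hp, integral_zero_measure, zero_sub, integral_neg, n]
  have hnuniv : n.real univ ≤ 1 := ENNReal.toReal_le_of_le_ofReal zero_le_one (by simpa using hn)
  have hbound : pairing μ e.1 ≤ overshoot e.1 :=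
    calc pairing μ e.1 ≤ ∫ _, overshoot e.1 ∂n := hpair ▸ integral_mono (e.integrable n).neg
          (integrable_const _) (neg_le_overshoot e.bddBelow_range)
      _ = n.real univ * overshoot e.1 := by rw [integral_const, smul_eq_mul]
      _ ≤ overshoot e.1 := mul_le_of_le_one_left (overshoot_nonneg _) hnuniv
  exact sub_nonpos.2 hbound

lemma iSup_objective_eq_zero (hp : μ.toJordanDecomposition.posPart = 0)
    (hn : μ.toJordanDecomposition.negPart univ ≤ 1) :
    ⨆ e : CZero, (objective μ e.1 : EReal) = 0 :=
  le_antisymm (iSup_le fun e => EReal.coe_nonpos.2 (objective_nonpos hp hn e))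
    (le_iSup_of_le (0 : CZero) (EReal.coe_nonneg.2 objective_zero.ge))

lemma exists_objective_pos_of_posPart_ne_zero (h : μ.toJordanDecomposition.posPart ≠ 0) :
    ∃ e : CZero, 0 < objective μ e.1 := by
  set p := μ.toJordanDecomposition.posPart
  set n := μ.toJordanDecomposition.negPart
  obtain ⟨A, hA, hnA, hpA⟩ := μ.exists_negPart_eq_zero_lt_posPart h
  obtain ⟨K, hKA, hK, hpK⟩ := hA.exists_lt_isCompact_of_ne_top (measure_ne_top p A) hpA
  have hnK : n K = 0 := measure_mono_null hKA hnA
  obtain ⟨U, hKU, hU, hnU⟩ := Set.exists_isOpen_lt_of_lt K (p K) (hnK ▸ hpK)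
  obtain ⟨g, hgs, hg01, hint⟩ := exists_continuous_measureReal_le_integral_le hK hU hKU
  refine ⟨CZero.ofHasCompactSupport g.continuous hgs, ?_⟩
  have hgap : n.real U < p.real K :=
    (ENNReal.toReal_lt_toReal (measure_ne_top _ _) (measure_ne_top _ _)).2 hnU
  have := (hint p).1
  have := (hint n).2
  change 0 < objective μ g
  rw [objective, pairing, overshoot_eq_zero_of_nonneg fun t => (hg01 t).1]
  linarith

lemma exists_objective_pos_of_one_lt_negPart (hp : μ.toJordanDecomposition.posPart = 0)
    (hn : 1 < μ.toJordanDecomposition.negPart univ) : ∃ e : CZero, 0 < objective μ e.1 := by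
  set n := μ.toJordanDecomposition.negPart
  obtain ⟨K, -, hK, hnK⟩ := MeasurableSet.univ.exists_lt_isCompact_of_ne_top (measure_ne_top n _) hn
  obtain ⟨g, hgs, hg01, hint⟩ :=
    exists_continuous_measureReal_le_integral_le hK isOpen_univ (subset_univ K)
  refine ⟨CZero.ofHasCompactSupport g.continuous.neg hgs.neg, ?_⟩
  have hnK' : 1 < n.real K := by
    simpa [measureReal_def] using
      (ENNReal.toReal_lt_toReal ENNReal.one_ne_top (measure_ne_top _ _)).2 hnK
  have hsup : overshoot (fun t => -g t) ≤ 1 := overshoot_le zero_le_one fun t => by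
    simpa using (hg01 t).2
  have := (hint n).1
  change 0 < objective μ (fun t => -g t)
  rw [objective, pairing, hp, integral_zero_measure, integral_neg]
  linarith

end Objective

theorem conjugate_overshoot_general
    (μ : SignedMeasure ℝ≥0) :
    ((μ ≤ 0 ∧ μ.totalVariation Set.univ ≤ 1) →
      (⨆ e : CZero, ((pairing μ e.1 - ⨆ t, max (-e.1 t) 0 : ℝ) : EReal)) = 0) ∧
    (¬(μ ≤ 0 ∧ μ.totalVariation Set.univ ≤ 1) →
      (⨆ e : CZero, ((pairing μ e.1 - ⨆ t, max (-e.1 t) 0 : ℝ) : EReal)) = ⊤) := by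
  change ((_ ∧ _) → ⨆ e : CZero, (objective μ e.1 : EReal) = 0) ∧
    (¬(_ ∧ _) → ⨆ e : CZero, (objective μ e.1 : EReal) = ⊤)
  refine ⟨fun ⟨hle, hvar⟩ => ?_, fun h => ?_⟩
  · rw [μ.totalVariation_eq_negPart_of_nonpos hle] at hvar
    exact iSup_objective_eq_zero (μ.posPart_eq_zero_iff.2 hle) hvar
  · by_cases hle : μ ≤ 0
    · have hvar : 1 < μ.toJordanDecomposition.negPart univ := by
        rw [← μ.totalVariation_eq_negPart_of_nonpos hle]
        exact lt_of_not_ge fun hvar => h ⟨hle, hvar⟩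
      obtain ⟨e, he⟩ := exists_objective_pos_of_one_lt_negPart (μ.posPart_eq_zero_iff.2 hle) hvar
      exact iSup_objective_eq_top he
    · obtain ⟨e, he⟩ := exists_objective_pos_of_posPart_ne_zero (mt μ.posPart_eq_zero_iff.1 hle)
      exact iSup_objective_eq_top he

/-- The Young–Fenchel conjugate of the overshoot functional
`f_os(e) = sup_{t≥0} max(-e t, 0)` on `C₀(ℝ₊)` is the indicator function of
`{μ : μ ≤ 0, ‖μ‖ ≤ 1}`: the supremum `sup_{e ∈ C₀} (∫₀^∞ e dμ - f_os(e))`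
is `0` when `μ ≤ 0` and `‖μ‖ ≤ 1` (variation norm), and `+∞` otherwise. -/
theorem conjugate_overshoot
    (μ : SignedMeasure ℝ≥0) (hreg : μ.totalVariation.Regular) :
    ((μ ≤ 0 ∧ μ.totalVariation Set.univ ≤ 1) →
      (⨆ e : CZero, ((pairing μ e.1 - ⨆ t, max (-e.1 t) 0 : ℝ) : EReal)) = 0) ∧
    (¬(μ ≤ 0 ∧ μ.totalVariation Set.univ ≤ 1) →
      (⨆ e : CZero, ((pairing μ e.1 - ⨆ t, max (-e.1 t) 0 : ℝ) : EReal)) = ⊤) :=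
  conjugate_overshoot_general μ
end

section
/- Let 0 < p₁ < z₁ be real numbers and set h = p₁/(z₁ − p₁). Then the supremum of a/z₁ over all pairs (a, b) of real numbers such that a e^{−z₁ t} − b e^{−p₁ t} ≤ 0 for all t ≥ 0 and ∫₀^∞ |a e^{−z₁ t} − b e^{−p₁ t}| dt ≤ 1, equals h. -/
/-!
On `t ≥ 0` the constraint `a e^{-z₁t} - b e^{-p₁t} ≤ 0` removes the absolute value, so the
integral constraint reads `b/p₁ - a/z₁ ≤ 1`; evaluating the pointwise constraint at `t = 0` gives
`a ≤ b`, hence `a (1/p₁ - 1/z₁) ≤ 1`, i.e. `a/z₁ ≤ p₁/(z₁ - p₁)`.  Equality holds for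
`a = b = p₁z₁/(z₁ - p₁)`.
-/

open MeasureTheory Set Real

lemma integrableOn_exp_neg_mul_Ici {c : ℝ} (hc : 0 < c) :
    IntegrableOn (fun t => exp (-c * t)) (Ici 0) :=
  (integrableOn_Ici_iff_integrableOn_Ioi).mpr (integrableOn_exp_mul_Ioi (neg_neg_of_pos hc) 0)

lemma integral_exp_neg_mul_Ici {c : ℝ} (hc : 0 < c) :
    ∫ t in Ici (0 : ℝ), exp (-c * t) = 1 / c := by
  rw [integral_Ici_eq_integral_Ioi, integral_exp_mul_Ioi (neg_neg_of_pos hc)]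
  simp

lemma integral_abs_sub_exp_of_nonpos {a b c d : ℝ} (hc : 0 < c) (hd : 0 < d)
    (hf : ∀ t, 0 ≤ t → a * exp (-c * t) - b * exp (-d * t) ≤ 0) :
    ∫ t in Ici (0 : ℝ), |a * exp (-c * t) - b * exp (-d * t)| = b / d - a / c := by
  have habs : ∀ t ∈ Ici (0 : ℝ),
      |a * exp (-c * t) - b * exp (-d * t)| = b * exp (-d * t) - a * exp (-c * t) := fun t ht => by
    rw [abs_of_nonpos (hf t ht), neg_sub]
  rw [setIntegral_congr_fun measurableSet_Ici habs,
    integral_sub ((integrableOn_exp_neg_mul_Ici hd).const_mul b)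
      ((integrableOn_exp_neg_mul_Ici hc).const_mul a),
    integral_const_mul, integral_const_mul, integral_exp_neg_mul_Ici hc,
    integral_exp_neg_mul_Ici hd, mul_one_div, mul_one_div]

lemma div_le_div_sub_of_le_of_div_sub_div_le_one {a b p z : ℝ} (hp : 0 < p) (hz : p < z)
    (hab : a ≤ b) (h : b / p - a / z ≤ 1) : a / z ≤ p / (z - p) := by
  have hz₀ : 0 < z := hp.trans hz
  have hzp : 0 < z - p := sub_pos.mpr hz
  have hap : a / p - a / z ≤ 1 := by linarith [div_le_div_of_nonneg_right hab hp.le]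
  rw [div_sub_div _ _ hp.ne' hz₀.ne', div_le_one (mul_pos hp hz₀)] at hap
  rw [div_le_div_iff₀ hz₀ hzp]
  nlinarith

/-- (OS DUAL for a first-order plant.) Let `0 < p₁ < z₁` and `h = p₁/(z₁ - p₁)`.  The
supremum of `a/z₁` over all real pairs `(a, b)` such that
`a e^{-z₁ t} - b e^{-p₁ t} ≤ 0` for all `t ≥ 0` and
`∫₀^∞ |a e^{-z₁ t} - b e^{-p₁ t}| dt ≤ 1`, equals `h`. -/
theorem os_dual_first_order (p₁ z₁ : ℝ) (hp : 0 < p₁) (hz : p₁ < z₁) :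
    sSup {v : ℝ | ∃ a b : ℝ,
        (∀ t : ℝ, 0 ≤ t → a * Real.exp (-z₁ * t) - b * Real.exp (-p₁ * t) ≤ 0) ∧
        (∫ t in Set.Ici (0 : ℝ), |a * Real.exp (-z₁ * t) - b * Real.exp (-p₁ * t)|) ≤ 1 ∧
        v = a / z₁} = p₁ / (z₁ - p₁) := by
  have hz₀ : 0 < z₁ := hp.trans hz
  have hzp : 0 < z₁ - p₁ := sub_pos.mpr hz
  set A := p₁ * z₁ / (z₁ - p₁) with hA
  have hA_nonpos : ∀ t : ℝ, 0 ≤ t → A * exp (-z₁ * t) - A * exp (-p₁ * t) ≤ 0 := fun t ht => by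
    have hexp : exp (-z₁ * t) ≤ exp (-p₁ * t) := exp_le_exp.mpr (by nlinarith)
    exact sub_nonpos.mpr (mul_le_mul_of_nonneg_left hexp (by positivity))
  refine IsGreatest.csSup_eq ⟨⟨A, A, hA_nonpos, ?_, ?_⟩, ?_⟩
  · rw [integral_abs_sub_exp_of_nonpos hz₀ hp hA_nonpos, hA]
    exact le_of_eq (by field_simp)
  · rw [hA]
    field_simp
  · rintro v ⟨a, b, hf, hint, rfl⟩
    rw [integral_abs_sub_exp_of_nonpos hz₀ hp hf] at hint
    exact div_le_div_sub_of_le_of_div_sub_div_le_one hp hz (by simpa using hf 0 le_rfl) hint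
end

section
/- Let 0 < p₁ < z₁ be real numbers and set h = p₁/(z₁ − p₁). Then the supremum of a/z₁ over all pairs (a, b) of real numbers such that ∫₀^∞ |a e^{−z₁ t} − b e^{−p₁ t}| dt ≤ 1, equals 1/(1 − 2^{−1/h}). -/
/-!
The dual variable is the sign function `g = 1` on `[0, T]`, `g = -1` on `(T, ∞)`, where
`T = log 2 / p₁` is chosen so that `∫₀^∞ g e^{-p₁ t} dt = 0`.  Pairing `g` with
`e(t) = a e^{-z₁ t} - b e^{-p₁ t}` kills `b` and gives `(a/z₁)(1 - ρ)` with
`ρ = e^{-(z₁ - p₁) T} = 2^{-1/h}`, so `(a/z₁)(1 - ρ) ≤ ∫ |e| ≤ 1`.  Equality holds for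
`b = ρ a`, since then `e(t) = a e^{-p₁ t} (e^{-(z₁ - p₁) t} - ρ)` changes sign exactly
at `T`.
-/

open MeasureTheory Set Real

section SignChange

variable {f : ℝ → ℝ} {a T : ℝ}

theorem intervalIntegral_sub_integral_Ioi_le_integral_abs (haT : a ≤ T)
    (hf : IntegrableOn f (Ioi a)) :
    (∫ t in a..T, f t) - ∫ t in Ioi T, f t ≤ ∫ t in Ioi a, |f t| := by
  rw [← intervalIntegral.integral_interval_add_Ioi hf.abs (hf.mono_set (Ioi_subset_Ioi haT)).abs]
  exact add_le_add ((le_abs_self _).trans (intervalIntegral.abs_integral_le_integral_abs haT))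
    ((neg_le_abs _).trans (abs_integral_le_integral_abs))

theorem intervalIntegral_sub_integral_Ioi_eq_integral_abs (haT : a ≤ T)
    (hf : IntegrableOn f (Ioi a)) (hpos : ∀ t ∈ Icc a T, 0 ≤ f t)
    (hneg : ∀ t ∈ Ioi T, f t ≤ 0) :
    (∫ t in a..T, f t) - ∫ t in Ioi T, f t = ∫ t in Ioi a, |f t| := by
  rw [← intervalIntegral.integral_interval_add_Ioi hf.abs
    (hf.mono_set (Ioi_subset_Ioi haT)).abs, sub_eq_add_neg, ← integral_neg]
  congr 1
  · refine intervalIntegral.integral_congr fun t ht => (abs_of_nonneg (hpos t ?_)).symm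
    rwa [uIcc_of_le haT] at ht
  · exact setIntegral_congr_fun measurableSet_Ioi fun t ht => (abs_of_nonpos (hneg t ht)).symm

end SignChange

section ExpDifference

variable {p z : ℝ}

theorem integrableOn_exp_sub_exp (hp : 0 < p) (hz : 0 < z) (a b x : ℝ) :
    IntegrableOn (fun t => a * exp (-z * t) - b * exp (-p * t)) (Ioi x) :=
  ((exp_neg_integrableOn_Ioi x hz).const_mul a).sub ((exp_neg_integrableOn_Ioi x hp).const_mul b)

theorem integral_Ioi_exp_sub_exp (hp : 0 < p) (hz : 0 < z) (a b x : ℝ) :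
    ∫ t in Ioi x, (a * exp (-z * t) - b * exp (-p * t))
      = a * exp (-z * x) / z - b * exp (-p * x) / p := by
  rw [integral_sub ((exp_neg_integrableOn_Ioi x hz).const_mul a)
      ((exp_neg_integrableOn_Ioi x hp).const_mul b), integral_const_mul, integral_const_mul,
    integral_exp_mul_Ioi (neg_lt_zero.2 hz), integral_exp_mul_Ioi (neg_lt_zero.2 hp)]
  field_simp

theorem intervalIntegral_sub_integral_Ioi_exp_sub_exp (hp : 0 < p) (hz : 0 < z) (a b : ℝ) :
    (∫ t in (0 : ℝ)..log 2 / p, (a * exp (-z * t) - b * exp (-p * t)))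
        - ∫ t in Ioi (log 2 / p), (a * exp (-z * t) - b * exp (-p * t))
      = a / z * (1 - exp (-(z - p) * (log 2 / p))) := by
  have hT : 0 ≤ log 2 / p := div_nonneg (log_nonneg one_le_two) hp.le
  have hpT : exp (-p * (log 2 / p)) = 1 / 2 := by
    rw [show -p * (log 2 / p) = -log 2 by field_simp, exp_neg, exp_log two_pos, one_div]
  have hzT : exp (-z * (log 2 / p)) = exp (-(z - p) * (log 2 / p)) / 2 := by
    rw [show -z * (log 2 / p) = -(z - p) * (log 2 / p) + -p * (log 2 / p) by ring, exp_add, hpT]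
    ring
  rw [← intervalIntegral.integral_Ioi_sub_Ioi (integrableOn_exp_sub_exp hp hz a b 0) hT,
    integral_Ioi_exp_sub_exp hp hz, integral_Ioi_exp_sub_exp hp hz, hzT, hpT, mul_zero, mul_zero,
    exp_zero]
  field_simp
  ring

theorem exp_sub_exp_eq_mul (a c t : ℝ) :
    a * exp (-z * t) - c * a * exp (-p * t) = a * exp (-p * t) * (exp (-(z - p) * t) - c) := by
  have h : exp (-z * t) = exp (-p * t) * exp (-(z - p) * t) := by
    rw [← exp_add]
    ring_nf
  rw [h]
  ring

variable {a T t : ℝ}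

theorem exp_sub_exp_nonneg_of_le (hpz : p ≤ z) (ha : 0 ≤ a) (ht : t ≤ T) :
    0 ≤ a * exp (-z * t) - exp (-(z - p) * T) * a * exp (-p * t) := by
  rw [exp_sub_exp_eq_mul]
  refine mul_nonneg (by positivity) (sub_nonneg.2 (exp_le_exp.2 ?_))
  nlinarith

theorem exp_sub_exp_nonpos_of_ge (hpz : p ≤ z) (ha : 0 ≤ a) (ht : T ≤ t) :
    a * exp (-z * t) - exp (-(z - p) * T) * a * exp (-p * t) ≤ 0 := by
  rw [exp_sub_exp_eq_mul]
  refine mul_nonpos_of_nonneg_of_nonpos (by positivity) (sub_nonpos.2 (exp_le_exp.2 ?_))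
  nlinarith

end ExpDifference

theorem exp_neg_mul_log_two_div (k p : ℝ) :
    exp (-k * (log 2 / p)) = (2 : ℝ) ^ (-1 / (p / k)) := by
  rw [rpow_def_of_pos two_pos, div_div_eq_mul_div]
  ring_nf

/-- (MA DUAL for a first-order plant.) Let `0 < p₁ < z₁` and `h = p₁/(z₁ - p₁)`.  The
supremum of `a/z₁` over all real pairs `(a, b)` such that
`∫₀^∞ |a e^{-z₁ t} - b e^{-p₁ t}| dt ≤ 1`, equals `1/(1 - 2^{-1/h})`. -/
theorem ma_dual_first_order (p₁ z₁ : ℝ) (hp : 0 < p₁) (hz : p₁ < z₁) :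
    sSup {v : ℝ | ∃ a b : ℝ,
        (∫ t in Set.Ici (0 : ℝ), |a * Real.exp (-z₁ * t) - b * Real.exp (-p₁ * t)|) ≤ 1 ∧
        v = a / z₁}
      = 1 / (1 - (2 : ℝ) ^ (-1 / (p₁ / (z₁ - p₁)))) := by
  rw [← exp_neg_mul_log_two_div]
  have hz0 : 0 < z₁ := hp.trans hz
  set T := log 2 / p₁
  have hT : 0 < T := div_pos (log_pos one_lt_two) hp
  set ρ := exp (-(z₁ - p₁) * T)
  have hρ : 0 < 1 - ρ :=
    sub_pos.2 (exp_lt_one_iff.2 (mul_neg_of_neg_of_pos (neg_neg_of_pos (sub_pos.2 hz)) hT))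
  refine IsGreatest.csSup_eq ⟨⟨z₁ / (1 - ρ), ρ * (z₁ / (1 - ρ)), ?_, by field_simp⟩, ?_⟩
  · have ha : 0 ≤ z₁ / (1 - ρ) := by positivity
    rw [integral_Ici_eq_integral_Ioi,
      ← intervalIntegral_sub_integral_Ioi_eq_integral_abs hT.le
        (integrableOn_exp_sub_exp hp hz0 _ _ 0)
        (fun t ht => exp_sub_exp_nonneg_of_le hz.le ha ht.2)
        (fun t ht => exp_sub_exp_nonpos_of_ge hz.le ha ht.le),
      intervalIntegral_sub_integral_Ioi_exp_sub_exp hp hz0, div_right_comm, div_self hz0.ne',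
      one_div_mul_cancel hρ.ne']
  · rintro v ⟨a, b, hab, rfl⟩
    rw [integral_Ici_eq_integral_Ioi] at hab
    rw [le_div_iff₀ hρ, ← intervalIntegral_sub_integral_Ioi_exp_sub_exp hp hz0 a b]
    exact (intervalIntegral_sub_integral_Ioi_le_integral_abs hT.le
      (integrableOn_exp_sub_exp hp hz0 a b 0)).trans hab
end

section
/- Let 0 < p₁ < z₁ be real numbers and set h = p₁/(z₁ − p₁). Then the supremum of a/z₁ over all pairs (a, b) of real numbers such that ∫₀^∞ max(a e^{−z₁ t} − b e^{−p₁ t}, 0) dt ≤ 1/2 and ∫₀^∞ min(a e^{−z₁ t} − b e^{−p₁ t}, 0) dt ≥ −1/2, equals (h+1)^{h+1}/(2 h^h). -/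
/-!
Weak duality: for `g = a e^{-z t} - b e^{-p t}` and any `T ≥ 0`, the tail integrals
`∫_{(u,∞)} g = a e^{-z u}/z - b e^{-p u}/p` give
`(a/z) (e^{-pT} - e^{-zT}) = e^{-pT} ∫_{(0,T]} g - (1 - e^{-pT}) ∫_{(T,∞)} g ≤ 1/2`,
because `∫_{(0,T]} g ≤ ∫ max(g,0) ≤ 1/2` and `∫_{(T,∞)} g ≥ ∫ min(g,0) ≥ -1/2`.
The gap `e^{-pT} - e^{-zT}` is largest at the time `T*` where `p e^{-pT} = z e^{-zT}`, and there
the bound is attained by `(a, b) = V (z, p)`: then `g = -V (e^{-zt} - e^{-pt})'` is positive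
before `T*` and negative after it.  At `T*` the gap equals `h^h / (h+1)^(h+1)`.
-/

open MeasureTheory Real Set

section PosNegParts

variable {α : Type*} [MeasurableSpace α] {μ : Measure α} {f : α → ℝ} {s u : Set α}

lemma setIntegral_le_setIntegral_max_zero (hsu : s ⊆ u) (hf : IntegrableOn f u μ) :
    ∫ x in s, f x ∂μ ≤ ∫ x in u, max (f x) 0 ∂μ :=
  calc ∫ x in s, f x ∂μ ≤ ∫ x in s, max (f x) 0 ∂μ :=
        setIntegral_mono (hf.mono_set hsu) (hf.mono_set hsu).pos_part fun _ => le_max_left _ _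
    _ ≤ ∫ x in u, max (f x) 0 ∂μ :=
        setIntegral_mono_set hf.pos_part (.of_forall fun _ => le_max_right _ _) hsu.eventuallyLE

lemma setIntegral_min_zero_le_setIntegral (hsu : s ⊆ u) (hf : IntegrableOn f u μ) :
    ∫ x in u, min (f x) 0 ∂μ ≤ ∫ x in s, f x ∂μ := by
  have hneg := setIntegral_le_setIntegral_max_zero hsu hf.neg
  have hmax : ∀ x, max (-f x) 0 = -min (f x) 0 := fun x => by rw [← max_neg_neg, neg_zero]
  simp only [Pi.neg_apply, hmax, integral_neg] at hneg
  linarith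

lemma setIntegral_max_zero_eq (hu : MeasurableSet u) (hs : MeasurableSet s) (hsu : s ⊆ u)
    (hpos : ∀ x ∈ s, 0 ≤ f x) (hneg : ∀ x ∈ u \ s, f x ≤ 0) :
    ∫ x in u, max (f x) 0 ∂μ = ∫ x in s, f x ∂μ := by
  rw [← inter_eq_right.2 hsu, ← setIntegral_indicator hs]
  refine setIntegral_congr_fun hu fun x hx => ?_
  by_cases hxs : x ∈ s
  · simp [indicator_of_mem hxs, hpos x hxs]
  · simp [indicator_of_notMem hxs, hneg x ⟨hx, hxs⟩]

lemma setIntegral_min_zero_eq (hu : MeasurableSet u) (hs : MeasurableSet s) (hsu : s ⊆ u)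
    (hneg : ∀ x ∈ s, f x ≤ 0) (hpos : ∀ x ∈ u \ s, 0 ≤ f x) :
    ∫ x in u, min (f x) 0 ∂μ = ∫ x in s, f x ∂μ := by
  rw [← inter_eq_right.2 hsu, ← setIntegral_indicator hs]
  refine setIntegral_congr_fun hu fun x hx => ?_
  by_cases hxs : x ∈ s
  · simp [indicator_of_mem hxs, hneg x hxs]
  · simp [indicator_of_notMem hxs, hpos x ⟨hx, hxs⟩]

end PosNegParts

lemma integral_exp_neg_mul_Ioi {c : ℝ} (hc : 0 < c) (u : ℝ) :
    ∫ t in Ioi u, exp (-c * t) = exp (-c * u) / c := by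
  rw [integral_exp_mul_Ioi (neg_lt_zero.2 hc), neg_div_neg_eq]

noncomputable def expComb (p z a b : ℝ) (t : ℝ) : ℝ := a * exp (-z * t) - b * exp (-p * t)

section ExpComb

variable {p z : ℝ} (a b : ℝ)

lemma integrableOn_expComb_Ioi (hp : 0 < p) (hz : 0 < z) (u : ℝ) :
    IntegrableOn (expComb p z a b) (Ioi u) :=
  ((exp_neg_integrableOn_Ioi u hz).const_mul a).sub ((exp_neg_integrableOn_Ioi u hp).const_mul b)

lemma integral_expComb_Ioi (hp : 0 < p) (hz : 0 < z) (u : ℝ) :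
    ∫ t in Ioi u, expComb p z a b t = a * exp (-z * u) / z - b * exp (-p * u) / p := by
  simp only [expComb]
  rw [integral_sub ((exp_neg_integrableOn_Ioi u hz).const_mul a)
    ((exp_neg_integrableOn_Ioi u hp).const_mul b), integral_const_mul, integral_const_mul,
    integral_exp_neg_mul_Ioi hz, integral_exp_neg_mul_Ioi hp, mul_div_assoc, mul_div_assoc]

lemma integral_expComb_Ioc (hp : 0 < p) (hz : 0 < z) {T : ℝ} (hT : 0 ≤ T) :
    ∫ t in Ioc 0 T, expComb p z a b t
      = (a / z - b / p) - (a * exp (-z * T) / z - b * exp (-p * T) / p) := by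
  rw [← intervalIntegral.integral_of_le hT,
    ← intervalIntegral.integral_Ioi_sub_Ioi (integrableOn_expComb_Ioi a b hp hz 0) hT,
    integral_expComb_Ioi a b hp hz, integral_expComb_Ioi a b hp hz]
  simp

lemma div_mul_exp_sub_exp_le_half (hp : 0 < p) (hz : 0 < z) {T : ℝ} (hT : 0 ≤ T)
    (hmax : ∫ t in Ici 0, max (expComb p z a b t) 0 ≤ 1 / 2)
    (hmin : -(1 / 2) ≤ ∫ t in Ici 0, min (expComb p z a b t) 0) :
    a / z * (exp (-p * T) - exp (-z * T)) ≤ 1 / 2 := by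
  have hg := integrableOn_expComb_Ioi a b hp hz 0
  rw [integral_Ici_eq_integral_Ioi] at hmax hmin
  have hhead :=
    (setIntegral_le_setIntegral_max_zero (Ioc_subset_Ioi_self : Ioc 0 T ⊆ _) hg).trans hmax
  have htail := hmin.trans (setIntegral_min_zero_le_setIntegral (Ioi_subset_Ioi hT) hg)
  rw [integral_expComb_Ioc a b hp hz hT] at hhead
  rw [integral_expComb_Ioi a b hp hz] at htail
  have hE1 : exp (-p * T) ≤ 1 := exp_le_one_iff.2 (by nlinarith)
  linear_combination exp (-p * T) * hhead + (1 - exp (-p * T)) * htail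

end ExpComb

noncomputable def switchTime (p z : ℝ) : ℝ := log (z / p) / (z - p)

section Switch

variable {p z : ℝ}

lemma switchTime_pos (hp : 0 < p) (hpz : p < z) : 0 < switchTime p z :=
  div_pos (log_pos ((one_lt_div hp).2 hpz)) (sub_pos.2 hpz)

lemma mul_exp_neg_le_iff_le_switchTime (hp : 0 < p) (hpz : p < z) (t : ℝ) :
    p * exp (-p * t) ≤ z * exp (-z * t) ↔ t ≤ switchTime p z := by
  have hsplit : exp (-p * t) = exp ((z - p) * t) * exp (-z * t) := by rw [← exp_add]; ring_nf
  rw [hsplit, ← mul_assoc, mul_le_mul_iff_of_pos_right (exp_pos _), mul_comm,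
    ← le_div_iff₀ hp, ← le_log_iff_exp_le (div_pos (hp.trans hpz) hp), switchTime,
    le_div_iff₀ (sub_pos.2 hpz), mul_comm]

variable {c : ℝ}

lemma integral_max_zero_expComb_switch (hp : 0 < p) (hpz : p < z) (hc : 0 ≤ c) :
    ∫ t in Ioi 0, max (expComb p z (c * z) (c * p) t) 0
      = c * (exp (-p * switchTime p z) - exp (-z * switchTime p z)) := by
  have hz := hp.trans hpz
  have hT := (switchTime_pos hp hpz).le
  rw [setIntegral_max_zero_eq measurableSet_Ioi measurableSet_Ioc Ioc_subset_Ioi_self,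
    integral_expComb_Ioc _ _ hp hz hT]
  · field_simp
    ring
  · intro t ht
    have := (mul_exp_neg_le_iff_le_switchTime hp hpz t).2 ht.2
    simp only [expComb]
    nlinarith
  · intro t ht
    have := (mul_exp_neg_le_iff_le_switchTime hp hpz t).not.2 fun htT => ht.2 ⟨ht.1, htT⟩
    simp only [expComb]
    nlinarith

lemma integral_min_zero_expComb_switch (hp : 0 < p) (hpz : p < z) (hc : 0 ≤ c) :
    ∫ t in Ioi 0, min (expComb p z (c * z) (c * p) t) 0
      = -(c * (exp (-p * switchTime p z) - exp (-z * switchTime p z))) := by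
  have hz := hp.trans hpz
  rw [setIntegral_min_zero_eq measurableSet_Ioi measurableSet_Ioi
      (Ioi_subset_Ioi (switchTime_pos hp hpz).le), integral_expComb_Ioi _ _ hp hz]
  · field_simp
    ring
  · intro t ht
    have := (mul_exp_neg_le_iff_le_switchTime hp hpz t).not.2 (not_le.2 ht)
    simp only [expComb]
    nlinarith
  · intro t ht
    have := (mul_exp_neg_le_iff_le_switchTime hp hpz t).2 (not_lt.1 ht.2)
    simp only [expComb]
    nlinarith

lemma exp_neg_mul_switchTime_sub (hp : 0 < p) (hpz : p < z) :
    exp (-p * switchTime p z) - exp (-z * switchTime p z)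
      = (p / (z - p)) ^ (p / (z - p)) / (p / (z - p) + 1) ^ (p / (z - p) + 1) := by
  have hz := hp.trans hpz
  have hd := sub_pos.2 hpz
  set h := p / (z - p) with hh
  have hsucc : h + 1 = z / (z - p) := by rw [hh]; field_simp; ring
  have hratio : h / (h + 1) = p / z := by rw [hsucc, hh]; field_simp
  have hfirst : exp (-p * switchTime p z) = (p / z) ^ h := by
    rw [rpow_def_of_pos (div_pos hp hz), ← inv_div, log_inv, switchTime, hh]
    congr 1
    ring
  have hsecond : exp (-z * switchTime p z) = exp (-p * switchTime p z) * (p / z) := by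
    rw [← exp_log (div_pos hp hz), ← exp_add, ← inv_div, log_inv, switchTime]
    congr 1
    field_simp
    ring
  have hh0 : 0 < h := div_pos hp hd
  rw [hsecond, hfirst, rpow_add_one (by positivity), div_mul_eq_div_div,
    ← div_rpow hh0.le (by positivity), hratio, hsucc]
  field_simp

end Switch

/-- (FL DUAL for a first-order plant.) Let `0 < p₁ < z₁` and `h = p₁/(z₁ - p₁)`.  The
supremum of `a/z₁` over all real pairs `(a, b)` such that
`∫₀^∞ max(a e^{-z₁ t} - b e^{-p₁ t}, 0) dt ≤ 1/2` and
`∫₀^∞ min(a e^{-z₁ t} - b e^{-p₁ t}, 0) dt ≥ -1/2`, equals `(h+1)^{h+1}/(2 h^h)`. -/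
theorem fl_dual_first_order (p₁ z₁ : ℝ) (hp : 0 < p₁) (hz : p₁ < z₁) :
    sSup {v : ℝ | ∃ a b : ℝ,
        (∫ t in Set.Ici (0 : ℝ), max (a * Real.exp (-z₁ * t) - b * Real.exp (-p₁ * t)) 0)
          ≤ 1 / 2 ∧
        -(1 / 2 : ℝ) ≤
          (∫ t in Set.Ici (0 : ℝ), min (a * Real.exp (-z₁ * t) - b * Real.exp (-p₁ * t)) 0) ∧
        v = a / z₁}
      = (p₁ / (z₁ - p₁) + 1) ^ (p₁ / (z₁ - p₁) + 1)
          / (2 * (p₁ / (z₁ - p₁)) ^ (p₁ / (z₁ - p₁))) := by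
  have hz₀ := hp.trans hz
  have hT := switchTime_pos hp hz
  have hgap : 0 < exp (-p₁ * switchTime p₁ z₁) - exp (-z₁ * switchTime p₁ z₁) :=
    sub_pos.2 (exp_lt_exp.2 (by nlinarith))
  set V := (p₁ / (z₁ - p₁) + 1) ^ (p₁ / (z₁ - p₁) + 1)
    / (2 * (p₁ / (z₁ - p₁)) ^ (p₁ / (z₁ - p₁))) with hV
  have hh := div_pos hp (sub_pos.2 hz)
  have hV₀ : 0 < V := by rw [hV]; positivity
  have hVgap : V * (exp (-p₁ * switchTime p₁ z₁) - exp (-z₁ * switchTime p₁ z₁)) = 1 / 2 := by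
    have := rpow_pos_of_pos hh (p₁ / (z₁ - p₁))
    have := rpow_pos_of_pos (add_pos hh one_pos) (p₁ / (z₁ - p₁) + 1)
    rw [hV, exp_neg_mul_switchTime_sub hp hz]
    field_simp
  refine IsGreatest.csSup_eq ⟨⟨z₁ * V, p₁ * V, ?_, ?_, by field_simp⟩, ?_⟩
  · rw [integral_Ici_eq_integral_Ioi, mul_comm z₁, mul_comm p₁]
    exact ((integral_max_zero_expComb_switch hp hz hV₀.le).trans hVgap).le
  · rw [integral_Ici_eq_integral_Ioi, mul_comm z₁, mul_comm p₁]
    exact ((integral_min_zero_expComb_switch hp hz hV₀.le).trans (by rw [hVgap])).ge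
  · rintro v ⟨a, b, hmax, hmin, rfl⟩
    exact le_of_mul_le_mul_right
      ((div_mul_exp_sub_exp_le_half a b hp hz₀ hT.le hmax hmin).trans hVgap.ge) hgap
end

section
/- Let 0 < p₁ < z₁ be real numbers. Then the supremum of a/z₁ over all pairs (a, b) of real numbers such that a e^{−z₁ t} − b e^{−p₁ t} ≥ 0 for all t ≥ 0 and ∫₀^∞ (a e^{−z₁ t} − b e^{−p₁ t}) dt ≤ 1, equals 1. -/
/-!
The constraint forces `b ≤ 0`: dividing it by `e^{-p₁ t}` gives `b ≤ a e^{(p₁ - z₁) t}`, whose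
right-hand side tends to `0`. The integral equals `a / z₁ - b / p₁ ≥ a / z₁`, so every feasible
value is at most `1`, and `(a, b) = (z₁, 0)` attains it.
-/

open MeasureTheory Real Set Filter

lemma integral_exp_neg_mul_Ioi_zero {c : ℝ} (hc : 0 < c) :
    ∫ t in Ioi (0 : ℝ), exp (-c * t) = 1 / c := by
  rw [integral_exp_mul_Ioi (neg_neg_of_pos hc)]
  field_simp
  simp

lemma integral_mul_exp_sub_mul_exp_Ici_zero (a b : ℝ) {z p : ℝ} (hz : 0 < z) (hp : 0 < p) :
    ∫ t in Ici (0 : ℝ), (a * exp (-z * t) - b * exp (-p * t)) = a / z - b / p := by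
  rw [integral_Ici_eq_integral_Ioi,
    integral_sub ((exp_neg_integrableOn_Ioi 0 hz).const_mul a)
      ((exp_neg_integrableOn_Ioi 0 hp).const_mul b),
    integral_const_mul, integral_const_mul, integral_exp_neg_mul_Ioi_zero hz,
    integral_exp_neg_mul_Ioi_zero hp, mul_one_div, mul_one_div]

lemma nonpos_of_forall_mul_exp_sub_mul_exp_nonneg {a b z p : ℝ} (hpz : p < z)
    (h : ∀ t : ℝ, 0 ≤ t → 0 ≤ a * exp (-z * t) - b * exp (-p * t)) : b ≤ 0 := by
  have bound (t : ℝ) (ht : 0 ≤ t) : b ≤ a * exp ((p - z) * t) := by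
    have hsplit : a * exp (-z * t) = a * exp ((p - z) * t) * exp (-p * t) := by
      rw [mul_assoc, ← exp_add]; ring_nf
    have := h t ht
    rw [hsplit] at this
    exact le_of_mul_le_mul_right (by linarith) (exp_pos _)
  have decay : Tendsto (fun t ↦ a * exp ((p - z) * t)) atTop (nhds 0) := by
    simpa using (tendsto_exp_atBot.comp
      (tendsto_id.const_mul_atTop_of_neg (sub_neg.mpr hpz))).const_mul a
  exact ge_of_tendsto decay (eventually_ge_atTop 0 |>.mono bound)

/-- (POS DUAL for a first-order plant.) Let `0 < p₁ < z₁`.  The supremum of `a/z₁` over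
all real pairs `(a, b)` such that `a e^{-z₁ t} - b e^{-p₁ t} ≥ 0` for all `t ≥ 0` and
`∫₀^∞ (a e^{-z₁ t} - b e^{-p₁ t}) dt ≤ 1`, equals `1`. -/
theorem pos_dual_first_order (p₁ z₁ : ℝ) (hp : 0 < p₁) (hz : p₁ < z₁) :
    sSup {v : ℝ | ∃ a b : ℝ,
        (∀ t : ℝ, 0 ≤ t → 0 ≤ a * Real.exp (-z₁ * t) - b * Real.exp (-p₁ * t)) ∧
        (∫ t in Set.Ici (0 : ℝ), (a * Real.exp (-z₁ * t) - b * Real.exp (-p₁ * t))) ≤ 1 ∧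
        v = a / z₁} = 1 := by
  have hz₀ : 0 < z₁ := hp.trans hz
  refine IsGreatest.csSup_eq ⟨⟨z₁, 0, fun t _ ↦ ?_, ?_, (div_self hz₀.ne').symm⟩, ?_⟩
  · simp only [zero_mul, sub_zero]
    positivity
  · rw [integral_mul_exp_sub_mul_exp_Ici_zero _ _ hz₀ hp, div_self hz₀.ne']
    simp
  · rintro v ⟨a, b, hpos, hint, rfl⟩
    have hb : b / p₁ ≤ 0 :=
      div_nonpos_of_nonpos_of_nonneg (nonpos_of_forall_mul_exp_sub_mul_exp_nonneg hz hpos) hp.le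
    rw [integral_mul_exp_sub_mul_exp_Ici_zero a b hz₀ hp] at hint
    linarith
end

section
/- For every real number h > 0, the following chain of inequalities holds: max(1, h) ≤ 1/(1 − 2^{−1/h}) ≤ (h+1)^{h+1}/h^h ≤ 2/(1 − 2^{−1/h}). -/
open Real

/-!
With `t = 1/h` and `β = 2^t` one has `2/(1 - 2^{-1/h}) = β^{h+1}/(β - 1)`, and `(h+1)^{h+1}/h^h` is
the minimum of `β^{h+1}/(β - 1)` over `β > 1` by Bernoulli's inequality with exponent `h + 1`;
this is the last inequality. The others compare `1 - 2^{-t}` with `t`, `t/2` (for `t ≤ 1`) and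
`t/(1+t)` (for `t ≥ 1`), using `e^x ≥ 1 + x` and Bernoulli's inequality for `2^t`, together with
`(1 + 1/h)^h ≥ 1`, and `≥ 2` when `h ≥ 1`.
-/

lemma one_sub_two_rpow_neg_le {t : ℝ} (ht : 0 ≤ t) : 1 - (2 : ℝ) ^ (-t) ≤ t := by
  have hexp : 1 - t * log 2 ≤ (2 : ℝ) ^ (-t) := by
    rw [rpow_def_of_pos two_pos]
    linarith [add_one_le_exp (log 2 * -t)]
  nlinarith [log_two_lt_d9]

lemma half_mul_le_one_sub_two_rpow_neg {t : ℝ} (ht₀ : 0 ≤ t) (ht₁ : t ≤ 1) :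
    t / 2 ≤ 1 - (2 : ℝ) ^ (-t) := by
  have h := rpow_one_add_le_one_add_mul_self (s := -1 / 2) (by norm_num) ht₀ ht₁
  rw [rpow_neg zero_le_two, ← inv_rpow zero_le_two]
  norm_num at h ⊢
  linarith

lemma div_one_add_le_one_sub_two_rpow_neg {t : ℝ} (ht : 1 ≤ t) :
    t / (1 + t) ≤ 1 - (2 : ℝ) ^ (-t) := by
  have h : 1 + t ≤ (2 : ℝ) ^ t := by
    simpa [one_add_one_eq_two] using one_add_mul_self_le_rpow_one_add (s := 1) (by norm_num) ht
  have h2 : (2 : ℝ) ^ (-t) ≤ 1 / (1 + t) := by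
    rw [rpow_neg zero_le_two, ← one_div]
    exact one_div_le_one_div_of_le (by linarith) h
  have : t / (1 + t) = 1 - 1 / (1 + t) := by field_simp; ring
  linarith

lemma rpow_add_one_div_rpow_self_eq {h : ℝ} (hh : 0 < h) :
    (h + 1) ^ (h + 1) / h ^ h = (h + 1) * (1 + 1 / h) ^ h := by
  rw [rpow_add_one (by positivity), show 1 + 1 / h = (h + 1) / h by field_simp,
    div_rpow (by positivity) hh.le]
  ring

lemma add_one_le_rpow_add_one_div_rpow_self {h : ℝ} (hh : 0 < h) :
    h + 1 ≤ (h + 1) ^ (h + 1) / h ^ h := by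
  rw [rpow_add_one_div_rpow_self_eq hh]
  have : 1 ≤ (1 + 1 / h) ^ h := one_le_rpow (by simp [hh.le]) hh.le
  nlinarith

lemma two_mul_add_one_le_rpow_add_one_div_rpow_self {h : ℝ} (hh : 1 ≤ h) :
    2 * (h + 1) ≤ (h + 1) ^ (h + 1) / h ^ h := by
  have hh₀ : 0 < h := by linarith
  rw [rpow_add_one_div_rpow_self_eq hh₀]
  have : 2 ≤ (1 + 1 / h) ^ h := by
    have := one_add_mul_self_le_rpow_one_add (s := 1 / h) (by linarith [one_div_pos.2 hh₀]) hh
    rwa [mul_one_div_cancel hh₀.ne', one_add_one_eq_two] at this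
  nlinarith

-- Equality holds at `β = 1 + 1/h`.
lemma rpow_add_one_div_rpow_self_le {h β : ℝ} (hh : 0 < h) (hβ : 1 < β) :
    (h + 1) ^ (h + 1) / h ^ h ≤ β ^ (h + 1) / (β - 1) := by
  have hB := one_add_mul_self_le_rpow_one_add (s := h * β / (h + 1) - 1)
    (by linarith [show 0 ≤ h * β / (h + 1) by positivity]) (p := h + 1) (by linarith)
  rw [add_sub_cancel, div_rpow (by positivity) (by positivity), mul_rpow hh.le (by positivity),
    le_div_iff₀ (by positivity)] at hB
  have hlin : 1 + (h + 1) * (h * β / (h + 1) - 1) = h * (β - 1) := by field_simp; ring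
  rw [hlin, rpow_add_one hh.ne'] at hB
  rw [div_le_div_iff₀ (by positivity) (by linarith)]
  refine le_of_mul_le_mul_left ?_ hh
  linarith

lemma two_div_one_sub_two_rpow_neg_eq {h : ℝ} (hh : 0 < h) :
    2 / (1 - (2 : ℝ) ^ (-(1 / h))) = ((2 : ℝ) ^ (1 / h)) ^ (h + 1) / ((2 : ℝ) ^ (1 / h) - 1) := by
  have hβ : 1 < (2 : ℝ) ^ (1 / h) := one_lt_rpow one_lt_two (by positivity)
  have hβh : ((2 : ℝ) ^ (1 / h)) ^ h = 2 := by
    rw [← rpow_mul zero_le_two, one_div_mul_cancel hh.ne', rpow_one]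
  rw [rpow_neg zero_le_two, rpow_add_one (by positivity), hβh]
  field_simp

/-- For every real `h > 0`,
`max(1, h) ≤ 1/(1 - 2^{-1/h}) ≤ (h+1)^{h+1}/h^h ≤ 2/(1 - 2^{-1/h})`,
where the powers are real powers. -/
theorem performance_chain_of_inequalities (h : ℝ) (hh : 0 < h) :
    max 1 h ≤ 1 / (1 - (2 : ℝ) ^ (-1 / h)) ∧
    1 / (1 - (2 : ℝ) ^ (-1 / h)) ≤ (h + 1) ^ (h + 1) / h ^ h ∧
    (h + 1) ^ (h + 1) / h ^ h ≤ 2 / (1 - (2 : ℝ) ^ (-1 / h)) := by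
  rw [neg_div]
  have hgap : 0 < 1 - (2 : ℝ) ^ (-(1 / h)) :=
    sub_pos.2 (rpow_lt_one_of_one_lt_of_neg one_lt_two (by simpa using hh))
  refine ⟨max_le ?_ ?_, ?_, ?_⟩
  · rw [le_one_div one_pos hgap, div_one]
    linarith [rpow_pos_of_pos two_pos (-(1 / h))]
  · rw [le_one_div hh hgap]
    exact one_sub_two_rpow_neg_le (by positivity)
  · rcases le_total h 1 with h_le | h_ge
    · calc 1 / (1 - (2 : ℝ) ^ (-(1 / h))) ≤ h + 1 := by
            rw [one_div_le hgap (by linarith)]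
            calc 1 / (h + 1) = 1 / h / (1 + 1 / h) := by field_simp
              _ ≤ _ := div_one_add_le_one_sub_two_rpow_neg ((one_le_div hh).2 h_le)
        _ ≤ (h + 1) ^ (h + 1) / h ^ h := add_one_le_rpow_add_one_div_rpow_self hh
    · calc 1 / (1 - (2 : ℝ) ^ (-(1 / h))) ≤ 2 * (h + 1) := by
            rw [one_div_le hgap (by linarith)]
            refine le_trans ?_ (half_mul_le_one_sub_two_rpow_neg (by positivity)
              ((div_le_one hh).2 h_ge))
            rw [div_div, one_div_le_one_div (by positivity) (by positivity)]
            linarith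
        _ ≤ (h + 1) ^ (h + 1) / h ^ h := two_mul_add_one_le_rpow_add_one_div_rpow_self h_ge
  · rw [two_div_one_sub_two_rpow_neg_eq hh]
    exact rpow_add_one_div_rpow_self_le hh (one_lt_rpow one_lt_two (by positivity))
end
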